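/- Let q be an even power of an odd prime with √q ≡ 3 (mod 4), and let w ∈ F_q be a nonsquare. Let O be the set of points of PG(2,q) of the form (a² + c²w : ab + cdw : b² + d²w), where a,b,c,d range over the subfield F_{√q} of F_q with ad − bc ≠ 0. Then every point of O is internal to the conic C : X₂² − X₁X₃ = 0, and no two points of O (equal or distinct) are conjugate; in particular O is an independent set of internal points in the Erdős–Rényi graph ER_q. -/

import Mathlib

open Projectivization

/-- Two points of `PG(2,q)` are conjugate with respect to the orthogonal polarity of the
conic `X₂² - X₁X₃ = 0` if the bilinear form `p₃q₁ - 2p₂q₂ + p₁q₃` vanishes (this is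
independent of the chosen representatives). -/
def ConjOdd {F : Type} [Field F] (P Q : Projectivization F (Fin 3 → F)) : Prop :=
  P.rep 2 * Q.rep 0 - 2 * P.rep 1 * Q.rep 1 + P.rep 0 * Q.rep 2 = 0

/-- The Erdős–Rényi polarity graph `ER_q`. -/
def ER (F : Type) [Field F] : SimpleGraph (Projectivization F (Fin 3 → F)) where
  Adj P Q := P ≠ Q ∧ ConjOdd P Q
  symm := ⟨by
    rintro P Q ⟨h1, h2⟩
    exact ⟨h1.symm, by unfold ConjOdd at *; linear_combination h2⟩⟩
  loopless := ⟨fun P h => h.1 rfl⟩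

/-- A point `P` of `PG(2,q)` is internal to the conic `C : X₂² - X₁X₃ = 0` if
`p₂² - p₁p₃` is a nonsquare of `F_q` (this is independent of representatives). -/
def IsInternal {F : Type} [Field F] (P : Projectivization F (Fin 3 → F)) : Prop :=
  ¬ IsSquare (P.rep 1 ^ 2 - P.rep 0 * P.rep 2)

/-- The orbit `O` of internal points: points of the form
`(a² + c²w : ab + cdw : b² + d²w)` with `a, b, c, d` in the subfield `F_{√q}`
(characterized by `x^{√q} = x`) and `ad - bc ≠ 0`. -/
def Oset (F : Type) [Field F] (s : ℕ) (w : F) : Set (Projectivization F (Fin 3 → F)) :=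
  {P | ∃ a b c d : F, a ^ s = a ∧ b ^ s = b ∧ c ^ s = c ∧ d ^ s = d ∧
    a * d - b * c ≠ 0 ∧
    ∃ hx : (![a ^ 2 + c ^ 2 * w, a * b + c * d * w, b ^ 2 + d ^ 2 * w] : Fin 3 → F) ≠ 0,
      P = Projectivization.mk F _ hx}

/-!
Let `K = {x | x ^ s = x}` be the subfield of order `s = √q`. For a point of `O` the
representative `(A, B, C)` has `B² - AC = -w (ad - bc)²`, a nonsquare because `-1` is a
square in `F_q`. For two points of `O` the conjugacy form equals
`ξ² + (η² + ζ²) w + τ² w²`, where `ξ, η, ζ, τ ∈ K` are `2 × 2` minors of the two parameter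
matrices. If it vanished, `w ∉ K` would be a root of a quadratic over `K`, whose other root is
then `w ^ s`; hence `ξ² = τ² w ^ (s + 1)`. The norm `w ^ (s + 1)` of the nonsquare `w` is not a
square in `K`, so `τ = ξ = 0`, and then `η² + ζ² = 0` forces `η = ζ = 0` because `-1` is not a
square in `K` when `s ≡ 3 (mod 4)`. But `(ad - bc)(a'd' - b'c')` is a combination of `η` and `τ`.
-/

/-- Vieta: since the coefficients are `σ`-fixed, `w` and `σ w` are the two roots. -/
theorem RingHom.const_eq_of_quadratic_root {F : Type*} [Field F] (σ : F →+* F)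
    {A B C w : F} (hA : σ A = A) (hB : σ B = B) (hC : σ C = C) (hw : σ w ≠ w)
    (h : A * w ^ 2 + B * w + C = 0) : C = A * w * σ w := by
  have hσ : A * σ w ^ 2 + B * σ w + C = 0 := by
    simpa only [map_add, map_mul, map_pow, map_zero, hA, hB, hC] using congrArg σ h
  have hfac : (w - σ w) * (A * (w + σ w) + B) = 0 := by linear_combination h - hσ
  have hsum : A * (w + σ w) + B = 0 :=
    (mul_eq_zero.mp hfac).resolve_left (sub_ne_zero.mpr (Ne.symm hw))
  linear_combination h - w * hsum

theorem sq_ne_neg_one_of_pow_eq_self {F : Type*} [Field F] {s : ℕ} (hs : s % 4 = 3)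
    (h2 : (2 : F) ≠ 0) {y : F} (hy : y ^ s = y) : y ^ 2 ≠ -1 := by
  intro hy2
  have hneg : y ^ s = -y := by
    rw [show s = 2 * (2 * (s / 4) + 1) + 1 by omega, pow_succ, pow_mul, hy2,
      Odd.neg_one_pow ⟨_, rfl⟩, neg_one_mul]
  have hy0 : y = 0 := by
    have : 2 * y = 0 := by linear_combination hneg - hy
    exact (mul_eq_zero.mp this).resolve_left h2
  simp [hy0] at hy2

theorem eq_zero_of_sq_add_sq_eq_zero {F : Type*} [Field F] {s : ℕ} (hs : s % 4 = 3)
    (h2 : (2 : F) ≠ 0) {y z : F} (hy : y ^ s = y) (hz : z ^ s = z) (h : y ^ 2 + z ^ 2 = 0) :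
    y = 0 ∧ z = 0 := by
  have hz0 : z = 0 := by
    by_contra hz0
    refine sq_ne_neg_one_of_pow_eq_self hs h2 (y := y / z) (by rw [div_pow, hy, hz]) ?_
    field_simp
    linear_combination h
  subst hz0
  exact ⟨pow_eq_zero_iff two_ne_zero |>.mp (by linear_combination h), rfl⟩

theorem Nat.odd_sq_div_two (m : ℕ) : (2 * m + 1) ^ 2 / 2 = 2 * m * (m + 1) := by
  have : (2 * m + 1) ^ 2 = 2 * (2 * m * (m + 1)) + 1 := by ring
  omega

section CardSq

variable {F : Type*} [Field F] [Fintype F] {s : ℕ}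

theorem exists_ringHom_eq_pow_of_card_eq_sq (hF : Fintype.card F = s ^ 2) :
    ∃ σ : F →+* F, ∀ x, σ x = x ^ s := by
  obtain ⟨n, hp, hn⟩ := FiniteField.card F (ringChar F)
  have hdvd : s ∣ ringChar F ^ (n : ℕ) := hn ▸ hF ▸ Dvd.intro s (sq s).symm
  obtain ⟨j, -, rfl⟩ := (Nat.dvd_prime_pow hp).mp hdvd
  have := Fact.mk hp
  exact ⟨iterateFrobenius F (ringChar F) j, fun _ => rfl⟩

theorem isSquare_neg_one_of_card_eq_sq (hF : Fintype.card F = s ^ 2) : IsSquare (-1 : F) := by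
  rw [FiniteField.isSquare_neg_one_iff, hF, Nat.pow_mod]
  have : s % 4 < 4 := Nat.mod_lt s (by norm_num)
  interval_cases s % 4 <;> decide

theorem ringChar_ne_two_of_card_eq_sq (hF : Fintype.card F = s ^ 2) (hs : Odd s) :
    ringChar F ≠ 2 := by
  rw [Ne, FiniteField.even_card_iff_char_two, hF, Nat.odd_iff.mp hs.pow]
  decide

theorem isSquare_of_pow_eq_self (hF : Fintype.card F = s ^ 2) (hs : Odd s) {x : F}
    (hx : x ^ s = x) : IsSquare x := by
  rcases eq_or_ne x 0 with rfl | hx0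
  · exact ⟨0, by simp⟩
  obtain ⟨m, rfl⟩ := hs
  have hx1 : x ^ (2 * m) = 1 := (mul_eq_right₀ hx0).mp (by rw [← pow_succ, hx])
  rw [FiniteField.isSquare_iff (ringChar_ne_two_of_card_eq_sq hF ⟨m, rfl⟩) hx0, hF,
    Nat.odd_sq_div_two, pow_mul, hx1, one_pow]

theorem pow_succ_ne_sq_of_not_isSquare (hF : Fintype.card F = s ^ 2) (hs : Odd s) {w r : F}
    (hw : ¬ IsSquare w) (hr : r ^ s = r) : w ^ (s + 1) ≠ r ^ 2 := by
  intro h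
  have hw0 : w ≠ 0 := by rintro rfl; exact hw ⟨0, by simp⟩
  have hr0 : r ≠ 0 := by rintro rfl; simp [hw0] at h
  obtain ⟨m, rfl⟩ := hs
  have hr1 : r ^ (2 * m) = 1 := (mul_eq_right₀ hr0).mp (by rw [← pow_succ, hr])
  apply hw
  rw [FiniteField.isSquare_iff (ringChar_ne_two_of_card_eq_sq hF ⟨m, rfl⟩) hw0, hF,
    Nat.odd_sq_div_two, show 2 * m * (m + 1) = (2 * m + 1 + 1) * m by ring, pow_mul, h,
    ← pow_mul, hr1]

theorem eq_zero_of_sq_add_mul_add_sq_mul_sq_eq_zero (hF : Fintype.card F = s ^ 2)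
    (hs : s % 4 = 3) (σ : F →+* F) (hσ : ∀ x, σ x = x ^ s) {w : F} (hw : ¬ IsSquare w)
    {ξ η ζ τ : F} (hξ : σ ξ = ξ) (hη : σ η = η) (hζ : σ ζ = ζ) (hτ : σ τ = τ)
    (h : ξ ^ 2 + (η ^ 2 + ζ ^ 2) * w + τ ^ 2 * w ^ 2 = 0) :
    ξ = 0 ∧ η = 0 ∧ ζ = 0 ∧ τ = 0 := by
  have hodd : Odd s := Nat.odd_iff.mpr (by omega)
  have hw0 : w ≠ 0 := by rintro rfl; exact hw ⟨0, by simp⟩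
  have hσw : σ w ≠ w := fun h => hw (isSquare_of_pow_eq_self hF hodd ((hσ w).symm.trans h))
  have hvieta : ξ ^ 2 = τ ^ 2 * w * σ w :=
    σ.const_eq_of_quadratic_root (B := η ^ 2 + ζ ^ 2) (by simp only [map_pow, hτ])
      (by simp only [map_add, map_pow, hη, hζ]) (by simp only [map_pow, hξ]) hσw
      (by linear_combination h)
  have hτ0 : τ = 0 := by
    by_contra hτ0
    refine pow_succ_ne_sq_of_not_isSquare hF hodd hw (r := ξ / τ)
      (by rw [div_pow, ← hσ, ← hσ, hξ, hτ]) ?_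
    rw [pow_succ', ← hσ]
    field_simp
    linear_combination -hvieta
  subst hτ0
  have hξ0 : ξ = 0 := pow_eq_zero_iff two_ne_zero |>.mp (by linear_combination hvieta)
  subst hξ0
  have hηζ : η ^ 2 + ζ ^ 2 = 0 :=
    (mul_eq_zero.mp (by linear_combination h)).resolve_right hw0
  have h2 : (2 : F) ≠ 0 := Ring.two_ne_zero (ringChar_ne_two_of_card_eq_sq hF hodd)
  obtain ⟨hη0, hζ0⟩ := eq_zero_of_sq_add_sq_eq_zero hs h2
    ((hσ η).symm.trans hη) ((hσ ζ).symm.trans hζ) hηζ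
  exact ⟨rfl, hη0, hζ0, rfl⟩

end CardSq

section Oset

variable {F : Type} [Field F] {s : ℕ} {w : F}

theorem exists_rep_of_mem_Oset {P : Projectivization F (Fin 3 → F)} (hP : P ∈ Oset F s w) :
    ∃ a b c d : F, a ^ s = a ∧ b ^ s = b ∧ c ^ s = c ∧ d ^ s = d ∧ a * d - b * c ≠ 0 ∧
      ∃ u : F, u ≠ 0 ∧ P.rep 0 = u * (a ^ 2 + c ^ 2 * w) ∧
        P.rep 1 = u * (a * b + c * d * w) ∧ P.rep 2 = u * (b ^ 2 + d ^ 2 * w) := by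
  obtain ⟨a, b, c, d, ha, hb, hc, hd, hD, hx, rfl⟩ := hP
  obtain ⟨u, hu⟩ := exists_smul_eq_mk_rep F _ hx
  refine ⟨a, b, c, d, ha, hb, hc, hd, hD, u, u.ne_zero, ?_, ?_, ?_⟩ <;>
    simp [← hu, Units.smul_def, mul_add]

theorem isInternal_of_mem_Oset (hneg : IsSquare (-1 : F)) (hw : ¬ IsSquare w)
    {P : Projectivization F (Fin 3 → F)} (hP : P ∈ Oset F s w) : IsInternal P := by
  obtain ⟨a, b, c, d, -, -, -, -, hD, u, hu, h0, h1, h2⟩ := exists_rep_of_mem_Oset hP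
  have hdisc : P.rep 1 ^ 2 - P.rep 0 * P.rep 2 = -w * (u * (a * d - b * c)) ^ 2 := by
    rw [h0, h1, h2]
    ring
  rintro ⟨r, hr⟩
  obtain ⟨i, hi⟩ := hneg
  have huD : u * (a * d - b * c) ≠ 0 := mul_ne_zero hu hD
  refine hw ⟨i * r / (u * (a * d - b * c)), ?_⟩
  field_simp
  linear_combination hr.symm.trans hdisc + r * r * hi

theorem conj_ne_zero_of_mem_Oset [Fintype F] (hF : Fintype.card F = s ^ 2) (hs : s % 4 = 3)
    (hw : ¬ IsSquare w) {P Q : Projectivization F (Fin 3 → F)} (hP : P ∈ Oset F s w)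
    (hQ : Q ∈ Oset F s w) :
    P.rep 2 * Q.rep 0 - 2 * P.rep 1 * Q.rep 1 + P.rep 0 * Q.rep 2 ≠ 0 := by
  obtain ⟨σ, hσ⟩ := exists_ringHom_eq_pow_of_card_eq_sq hF
  obtain ⟨a, b, c, d, ha, hb, hc, hd, hD, u, hu, h0, h1, h2⟩ := exists_rep_of_mem_Oset hP
  obtain ⟨a', b', c', d', ha', hb', hc', hd', hD', t, ht, g0, g1, g2⟩ :=
    exists_rep_of_mem_Oset hQ
  have minor_fixed : ∀ x y x' y' : F, x ^ s = x → y ^ s = y → x' ^ s = x' → y' ^ s = y' →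
      σ (x * y - x' * y') = x * y - x' * y' := by
    intro x y x' y' hx hy hx' hy'
    rw [map_sub, map_mul, map_mul, hσ x, hσ y, hσ x', hσ y', hx, hy, hx', hy']
  intro h
  rw [h0, h1, h2, g0, g1, g2] at h
  have hform : (a * b' - a' * b) ^ 2 + ((a * d' - b * c') ^ 2 + (a' * d - b' * c) ^ 2) * w +
      (c * d' - c' * d) ^ 2 * w ^ 2 = 0 :=
    (mul_eq_zero.mp (by linear_combination h)).resolve_left (mul_ne_zero hu ht)
  obtain ⟨-, hη, -, hτ⟩ := eq_zero_of_sq_add_mul_add_sq_mul_sq_eq_zero hF hs σ hσ hw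
    (minor_fixed _ _ _ _ ha hb' ha' hb) (minor_fixed _ _ _ _ ha hd' hb hc')
    (minor_fixed _ _ _ _ ha' hd hb' hc) (minor_fixed _ _ _ _ hc hd' hc' hd) hform
  exact mul_ne_zero hD hD'
    (by linear_combination (a' * d - b' * c) * hη + (a * b' - a' * b) * hτ)

end Oset

theorem Oset_internal_non_conjugate_general
    (s : ℕ)
    (hmod : s % 4 = 3)
    (F : Type) [Field F] [Fintype F] (hF : Fintype.card F = s ^ 2)
    (w : F) (hw : ¬ IsSquare w) :
    (∀ P ∈ Oset F s w, IsInternal P) ∧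
    (∀ P ∈ Oset F s w, ∀ Q ∈ Oset F s w,
      P.rep 2 * Q.rep 0 - 2 * P.rep 1 * Q.rep 1 + P.rep 0 * Q.rep 2 ≠ 0) ∧
    (∀ P ∈ Oset F s w, ∀ Q ∈ Oset F s w, ¬ (ER F).Adj P Q) := by
  have non_conj : ∀ P ∈ Oset F s w, ∀ Q ∈ Oset F s w,
      P.rep 2 * Q.rep 0 - 2 * P.rep 1 * Q.rep 1 + P.rep 0 * Q.rep 2 ≠ 0 :=
    fun P hP Q hQ => conj_ne_zero_of_mem_Oset hF hmod hw hP hQ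
  exact ⟨fun P hP => isInternal_of_mem_Oset (isSquare_neg_one_of_card_eq_sq hF) hw hP,
    non_conj, fun P hP Q hQ hadj => non_conj P hP Q hQ hadj.2⟩

/-- Let `q = s²` be an even power of an odd prime with `s = √q ≡ 3 (mod 4)` and let
`w ∈ F_q` be a nonsquare. Then every point of `O` is internal to `C : X₂² - X₁X₃ = 0`,
no two points of `O` (equal or distinct) are conjugate, and in particular `O` is an
independent set of internal points in `ER_q`. -/
theorem Oset_internal_non_conjugate
    (p k s : ℕ) (hp : p.Prime) (hpodd : Odd p) (hk : 0 < k) (hs : s = p ^ k)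
    (hmod : s % 4 = 3)
    (F : Type) [Field F] [Fintype F] (hF : Fintype.card F = s ^ 2)
    (w : F) (hw : ¬ IsSquare w) :
    (∀ P ∈ Oset F s w, IsInternal P) ∧
    (∀ P ∈ Oset F s w, ∀ Q ∈ Oset F s w,
      P.rep 2 * Q.rep 0 - 2 * P.rep 1 * Q.rep 1 + P.rep 0 * Q.rep 2 ≠ 0) ∧
    (∀ P ∈ Oset F s w, ∀ Q ∈ Oset F s w, ¬ (ER F).Adj P Q) :=
  Oset_internal_non_conjugate_general s hmod F hF w hw
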